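/- If (Y,S) is a POD minimal system and M is a minimal subset of Y×X for a minimal system (X,T) that is not an extension of Y, then M = Y×X. (Key step: if (S^n × id_X)M ∩ M ≠ ∅ for a minimal set M and some n, then (S^n × id_X)M = M.) -/

import Mathlib

/-- The group of self-homeomorphisms under composition, so that `T ^ n` (`n : ℤ`)
denotes the `n`-th iterate of `T`. -/
instance Homeomorph.instGroupPow {X : Type*} [TopologicalSpace X] : Group (X ≃ₜ X) where
  mul f g := g.trans f
  one := Homeomorph.refl X
  inv := Homeomorph.symm
  mul_assoc _ _ _ := Homeomorph.ext fun _ => rfl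
  one_mul _ := Homeomorph.ext fun _ => rfl
  mul_one _ := Homeomorph.ext fun _ => rfl
  inv_mul_cancel f := Homeomorph.ext fun x => f.symm_apply_apply x

/-- The orbit closure of a point under a homeomorphism. -/
def orbitCl {X : Type*} [TopologicalSpace X] (T : X ≃ₜ X) (p : X) : Set X :=
  closure {q | ∃ n : ℤ, (T ^ n) p = q}

/-- A (minimal) dynamical system: every orbit closure is everything. -/
def IsMinimalSys {X : Type*} [TopologicalSpace X] (T : X ≃ₜ X) : Prop :=
  ∀ x : X, orbitCl T x = Set.univ

/-- Totally minimal: every nonzero power is minimal. -/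
def IsTotallyMinimal {X : Type*} [TopologicalSpace X] (T : X ≃ₜ X) : Prop :=
  ∀ n : ℤ, n ≠ 0 → IsMinimalSys (T ^ n)

/-- The graph Γ_n = {(T^n x, x) : x ∈ X}. -/
def graphPow {X : Type*} [TopologicalSpace X] (T : X ≃ₜ X) (n : ℤ) : Set (X × X) :=
  {p | ∃ x : X, p = ((T ^ n) x, x)}

/-- POD: totally minimal and for distinct u, v some graph Γ_n (n ≠ 0) lies in the
orbit closure of (u, v) under T × T. -/
def IsPOD {X : Type*} [TopologicalSpace X] (T : X ≃ₜ X) : Prop :=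
  IsMinimalSys T ∧ IsTotallyMinimal T ∧
    ∀ u v : X, u ≠ v → ∃ n : ℤ, n ≠ 0 ∧
      graphPow T n ⊆ orbitCl (T.prodCongr T) (u, v)

/-- Doubly minimal: minimal, and every orbit closure of T × T is either everything
or a graph Γ_m. -/
def IsDoublyMinimal {X : Type*} [TopologicalSpace X] (T : X ≃ₜ X) : Prop :=
  IsMinimalSys T ∧
    ∀ p : X × X, orbitCl (T.prodCongr T) p = Set.univ ∨
      ∃ m : ℤ, orbitCl (T.prodCongr T) p = graphPow T m

/-- A factor map: continuous equivariant surjection. -/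
def IsFactorMap {X Y : Type*} [TopologicalSpace X] [TopologicalSpace Y]
    (T : X ≃ₜ X) (S : Y ≃ₜ Y) (π : X → Y) : Prop :=
  Continuous π ∧ Function.Surjective π ∧ ∀ x, π (T x) = S (π x)

/-- Disjointness: the only closed invariant subset of the product projecting
onto both coordinates is the whole product. -/
def SysDisjoint {X Y : Type*} [TopologicalSpace X] [TopologicalSpace Y]
    (T : X ≃ₜ X) (S : Y ≃ₜ Y) : Prop :=
  ∀ M : Set (X × Y), IsClosed M → (T.prodCongr S) '' M = M →
    Prod.fst '' M = Set.univ → Prod.snd '' M = Set.univ → M = Set.univ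

/-- A recurrent point: in the closure of its forward orbit with positive times. -/
def IsRecurrentPt {X : Type*} [TopologicalSpace X] (T : X ≃ₜ X) (x : X) : Prop :=
  x ∈ closure {q | ∃ n : ℕ, 1 ≤ n ∧ (T ^ n) x = q}

/-- A proximal pair: the orbits come arbitrarily close together. -/
def IsProximal {X : Type*} [PseudoMetricSpace X] (T : X ≃ₜ X) (x x' : X) : Prop :=
  ∀ ε > 0, ∃ n : ℤ, dist ((T ^ n) x) ((T ^ n) x') < ε

/-- A distal point: proximal only to itself. -/
def IsDistalPt {X : Type*} [PseudoMetricSpace X] (T : X ≃ₜ X) (x : X) : Prop :=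
  ∀ x', IsProximal T x x' → x' = x

/-- A minimal subset: nonempty, closed, invariant, with all orbits dense in it. -/
def IsMinimalSubset {X : Type*} [TopologicalSpace X] (T : X ≃ₜ X) (M : Set X) : Prop :=
  M.Nonempty ∧ IsClosed M ∧ (T : X ≃ₜ X) '' M = M ∧
    ∀ p ∈ M, M ⊆ closure {q | ∃ n : ℤ, (T ^ n) p = q}

/-- Topological transitivity. -/
def IsTopTransitive {X : Type*} [TopologicalSpace X] (T : X ≃ₜ X) : Prop :=
  ∀ U V : Set X, IsOpen U → IsOpen V → U.Nonempty → V.Nonempty →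
    ∃ n : ℤ, ((T ^ n) '' U ∩ V).Nonempty

/-- Weak mixing: the product system is topologically transitive. -/
def IsWeaklyMixing {X : Type*} [TopologicalSpace X] (T : X ≃ₜ X) : Prop :=
  IsTopTransitive (T.prodCongr T)

/-!
If every fibre `{y | (y, x) ∈ M}` of the minimal set `M` is a single point, `M` is the graph of a
factor map `X → Y` (a closed graph into a compact space is continuous). Otherwise take `u ≠ v` in
one fibre. POD puts `(S^n u, u)` in the orbit closure of `(u, v)`, and compactness of `X` yields a
fibre containing both `S^n u` and `u`. So the minimal sets `M` and `(S^n × id) M` meet, hence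
coincide; every fibre is then a nonempty closed `S^n`-invariant set, which total minimality forces
to be all of `Y`.
-/

open Set

namespace Homeomorph

variable {Z W : Type*} [TopologicalSpace Z] [TopologicalSpace W]

def prodCongrHom : (Z ≃ₜ Z) × (W ≃ₜ W) →* (Z × W ≃ₜ Z × W) :=
  MonoidHom.mk' (fun p => p.1.prodCongr p.2) fun _ _ => rfl

theorem prodCongr_zpow (f : Z ≃ₜ Z) (g : W ≃ₜ W) (n : ℤ) :
    f.prodCongr g ^ n = (f ^ n).prodCongr (g ^ n) :=
  (map_zpow prodCongrHom (f, g) n).symm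

theorem commute_prodCongr {f f' : Z ≃ₜ Z} {g g' : W ≃ₜ W} (hf : Commute f f')
    (hg : Commute g g') : Commute (f.prodCongr g) (f'.prodCongr g') :=
  (Commute.prod (x := (f, g)) (y := (f', g')) hf hg).map prodCongrHom

def setStabilizer (A : Set Z) : Subgroup (Z ≃ₜ Z) where
  carrier := {g | g '' A = A}
  mul_mem' {a b} ha hb := by
    change (a ∘ b) '' A = A
    rw [image_comp, show b '' A = A from hb, ha]
  one_mem' := image_id A
  inv_mem' {a} ha := by
    change a.symm '' A = A
    calc a.symm '' A = a.symm '' (a '' A) := by rw [show a '' A = A from ha]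
      _ = A := a.symm_image_image A

theorem zpow_image_eq_of_image_eq {f : Z ≃ₜ Z} {A : Set Z} (h : f '' A = A) (n : ℤ) :
    (f ^ n) '' A = A :=
  (setStabilizer A).zpow_mem h n

theorem zpow_apply_mem_of_image_eq {f : Z ≃ₜ Z} {A : Set Z} (h : f '' A = A) (n : ℤ)
    {a : Z} (ha : a ∈ A) : (f ^ n) a ∈ A :=
  zpow_image_eq_of_image_eq h n ▸ mem_image_of_mem _ ha

end Homeomorph

open Homeomorph

section MinimalSubset

variable {Z : Type*} [TopologicalSpace Z] {F : Z ≃ₜ Z}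

theorem orbitCl_subset {A : Set Z} (hA : IsClosed A) (hinv : ∀ n : ℤ, ∀ a ∈ A, (F ^ n) a ∈ A)
    {p : Z} (hp : p ∈ A) : orbitCl F p ⊆ A :=
  closure_minimal (by rintro _ ⟨n, rfl⟩; exact hinv n p hp) hA

theorem IsMinimalSys.eq_univ_of_isClosed (hF : IsMinimalSys F) {A : Set Z} (hA : IsClosed A)
    (hinv : ∀ n : ℤ, ∀ a ∈ A, (F ^ n) a ∈ A) (hne : A.Nonempty) : A = univ :=
  eq_univ_of_univ_subset (hF hne.some ▸ orbitCl_subset hA hinv hne.some_mem)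

variable {M N : Set Z}

theorem IsMinimalSubset.eq_orbitCl (hM : IsMinimalSubset F M) {p : Z} (hp : p ∈ M) :
    M = orbitCl F p :=
  (hM.2.2.2 p hp).antisymm
    (orbitCl_subset hM.2.1 (fun n _ ha => zpow_apply_mem_of_image_eq hM.2.2.1 n ha) hp)

theorem IsMinimalSubset.eq_of_mem_of_mem (hM : IsMinimalSubset F M) (hN : IsMinimalSubset F N)
    {p : Z} (hpM : p ∈ M) (hpN : p ∈ N) : M = N :=
  (hM.eq_orbitCl hpM).trans (hN.eq_orbitCl hpN).symm

theorem IsMinimalSubset.image_of_commute {G : Z ≃ₜ Z} (hFG : Commute F G)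
    (hM : IsMinimalSubset F M) : IsMinimalSubset F (G '' M) := by
  obtain ⟨hne, hcl, hinv, hdense⟩ := hM
  have hcomm (n : ℤ) (z : Z) : (F ^ n) (G z) = G ((F ^ n) z) :=
    DFunLike.congr_fun (hFG.zpow_left n).eq z
  refine ⟨hne.image G, G.isClosedMap _ hcl, ?_, ?_⟩
  · rw [← image_comp, show ⇑F ∘ ⇑G = ⇑G ∘ ⇑F from funext (hcomm 1), image_comp, hinv]
  · rintro _ ⟨p, hp, rfl⟩
    calc G '' M ⊆ G '' closure {q | ∃ n : ℤ, (F ^ n) p = q} := image_mono (hdense p hp)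
      _ ⊆ closure (G '' {q | ∃ n : ℤ, (F ^ n) p = q}) :=
        image_closure_subset_closure_image G.continuous
      _ ⊆ closure {q | ∃ n : ℤ, (F ^ n) (G p) = q} := by
        gcongr
        rintro _ ⟨_, ⟨n, rfl⟩, rfl⟩
        exact ⟨n, hcomm n p⟩

theorem IsMinimalSubset.image_eq_of_commute {G : Z ≃ₜ Z} (hFG : Commute F G)
    (hM : IsMinimalSubset F M) {p : Z} (hp : p ∈ M) (hGp : G p ∈ M) : G '' M = M :=
  (hM.image_of_commute hFG).eq_of_mem_of_mem hM (mem_image_of_mem G hp) hGp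

theorem IsMinimalSubset.image_eq_univ [CompactSpace Z] {W : Type*} [TopologicalSpace W]
    [T2Space W] {G : W ≃ₜ W} (hG : IsMinimalSys G) {π : Z → W} (hπ : Continuous π)
    (hπF : ∀ (n : ℤ) (z : Z), π ((F ^ n) z) = (G ^ n) (π z)) (hM : IsMinimalSubset F M) :
    π '' M = univ := by
  refine hG.eq_univ_of_isClosed (hM.2.1.isCompact.image hπ).isClosed ?_ (hM.1.image π)
  rintro n _ ⟨z, hz, rfl⟩
  exact ⟨(F ^ n) z, zpow_apply_mem_of_image_eq hM.2.2.1 n hz, hπF n z⟩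

end MinimalSubset

section Product

variable {X Y : Type*} [TopologicalSpace X] [TopologicalSpace Y] {M : Set (Y × X)}

theorem continuous_of_isClosed_of_mem_iff [CompactSpace Y] (hM : IsClosed M) {f : X → Y}
    (hf : ∀ y x, (y, x) ∈ M ↔ y = f x) : Continuous f := by
  refine continuous_iff_isClosed.2 fun C hC => ?_
  have hpre : f ⁻¹' C = Prod.snd '' (M ∩ Prod.fst ⁻¹' C) := by
    ext x
    simp [hf]
  rw [hpre]
  exact isClosedMap_snd_of_compactSpace _ (hM.inter (hC.preimage continuous_fst))

theorem exists_isFactorMap_of_subsingleton_fibers [CompactSpace Y] {S : Y ≃ₜ Y} {T : X ≃ₜ X}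
    (hcl : IsClosed M) (hinv : S.prodCongr T '' M = M) (hfst : Prod.fst '' M = univ)
    (hsnd : Prod.snd '' M = univ) (hsub : ∀ x u v, (u, x) ∈ M → (v, x) ∈ M → u = v) :
    ∃ π : X → Y, IsFactorMap T S π := by
  have hfib (x : X) : ∃ y, (y, x) ∈ M := by
    obtain ⟨⟨y, _⟩, hy, rfl⟩ := hsnd.symm ▸ mem_univ x
    exact ⟨y, hy⟩
  choose π hπ using hfib
  have hmem_iff (y : Y) (x : X) : (y, x) ∈ M ↔ y = π x :=
    ⟨fun h => hsub x y (π x) h (hπ x), fun h => h ▸ hπ x⟩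
  refine ⟨π, continuous_of_isClosed_of_mem_iff hcl hmem_iff, fun y => ?_, fun x => ?_⟩
  · obtain ⟨⟨_, x⟩, hx, rfl⟩ := hfst.symm ▸ mem_univ y
    exact ⟨x, ((hmem_iff _ _).1 hx).symm⟩
  · exact ((hmem_iff _ _).1 (hinv ▸ mem_image_of_mem _ (hπ x))).symm

/-- The pairs `(a, b)` with a common `M`-fibre form a closed `S × S`-invariant set: it is the
projection of a closed set along the compact factor `X`. -/
theorem exists_mem_mem_of_mem_orbitCl [CompactSpace X] {S : Y ≃ₜ Y} {T : X ≃ₜ X}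
    (hcl : IsClosed M) (hinv : S.prodCongr T '' M = M) {u v : Y} {x : X} (hu : (u, x) ∈ M)
    (hv : (v, x) ∈ M) {a b : Y} (hab : (a, b) ∈ orbitCl (S.prodCongr S) (u, v)) :
    ∃ z, (a, z) ∈ M ∧ (b, z) ∈ M := by
  set K : Set (Y × Y) := Prod.fst '' {q : (Y × Y) × X | (q.1.1, q.2) ∈ M ∧ (q.1.2, q.2) ∈ M}
  have hK : IsClosed K :=
    isClosedMap_fst_of_compactSpace _ <|
      (hcl.preimage (by fun_prop)).inter (hcl.preimage (by fun_prop))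
  have hKinv (n : ℤ) : ∀ q ∈ K, ((S.prodCongr S) ^ n) q ∈ K := by
    rintro _ ⟨⟨⟨c, d⟩, z⟩, ⟨hc, hd⟩, rfl⟩
    have hM' := zpow_apply_mem_of_image_eq hinv n (a := (c, z))
    have hM'' := zpow_apply_mem_of_image_eq hinv n (a := (d, z))
    rw [prodCongr_zpow] at hM' hM'' ⊢
    exact ⟨(((S ^ n) c, (S ^ n) d), (T ^ n) z), ⟨hM' hc, hM'' hd⟩, rfl⟩
  obtain ⟨⟨_, z⟩, hz, hq⟩ := orbitCl_subset hK hKinv ⟨(_, x), ⟨hu, hv⟩, rfl⟩ hab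
  cases hq
  exact ⟨z, hz⟩

theorem eq_univ_of_prodCongr_one_image_eq {R : Y ≃ₜ Y} (hR : IsMinimalSys R) (hcl : IsClosed M)
    (hinv : R.prodCongr 1 '' M = M) (hsnd : Prod.snd '' M = univ) : M = univ := by
  refine eq_univ_of_forall ?_
  rintro ⟨y, x⟩
  obtain ⟨⟨y₀, x₀⟩, hy₀, hx₀ : x₀ = x⟩ := hsnd.symm ▸ mem_univ x
  have hfiber : {w | (w, x) ∈ M} = univ := by
    refine hR.eq_univ_of_isClosed (hcl.preimage (by fun_prop)) (fun n w hw => ?_) ⟨y₀, hx₀ ▸ hy₀⟩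
    have := zpow_apply_mem_of_image_eq hinv n hw
    rwa [prodCongr_zpow, one_zpow] at this
  exact (hfiber.symm ▸ mem_univ y : y ∈ {w | (w, x) ∈ M})

end Product

theorem pod_minimalSubset_eq_univ {X Y : Type*} [MetricSpace X] [CompactSpace X] [MetricSpace Y] [CompactSpace Y]
    (T : X ≃ₜ X) (S : Y ≃ₜ Y) (hS : IsPOD S) (hT : IsMinimalSys T)
    (hnf : ¬ ∃ π : X → Y, IsFactorMap T S π)
    (M : Set (Y × X)) (hM : IsMinimalSubset (S.prodCongr T) M) :
    M = Set.univ := by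
  obtain ⟨hSmin, hStot, hSpod⟩ := hS
  have hfst : Prod.fst '' M = univ :=
    hM.image_eq_univ hSmin continuous_fst fun n p => by rw [prodCongr_zpow]; rfl
  have hsnd : Prod.snd '' M = univ :=
    hM.image_eq_univ hT continuous_snd fun n p => by rw [prodCongr_zpow]; rfl
  by_cases hsub : ∀ x u v, (u, x) ∈ M → (v, x) ∈ M → u = v
  · exact absurd (exists_isFactorMap_of_subsingleton_fibers hM.2.1 hM.2.2.1 hfst hsnd hsub) hnf
  push Not at hsub
  obtain ⟨x, u, v, hu, hv, huv⟩ := hsub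
  obtain ⟨n, hn, hgraph⟩ := hSpod u v huv
  obtain ⟨z, hSnu, hu'⟩ := exists_mem_mem_of_mem_orbitCl hM.2.1 hM.2.2.1 hu hv (hgraph ⟨u, rfl⟩)
  have hcomm : Commute (S.prodCongr T) ((S ^ n).prodCongr 1) :=
    commute_prodCongr (Commute.self_zpow S n) (Commute.one_right T)
  exact eq_univ_of_prodCongr_one_image_eq (hStot n hn) hM.2.1
    (hM.image_eq_of_commute hcomm hu' hSnu) hsnd
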